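/- arXiv:1706.06740 — 4 statements merged into one kernel-verified Lean document; each statement's English description precedes it below -/
import Mathlib

section
/- Assuming the KKM lemma, Sperner's lemma holds: for any simplicial subdivision of the unit simplex $\Delta \subseteq \mathbb{R}^n$ with a Sperner labeling, there exists a completely labeled simplex in the subdivision. -/
/-!
Let `C i` be the set of points of the simplex that, inside some cell `S` of the subdivision, have
barycentric weight at least `c = 1/(n+1)` at a vertex labelled `i`; it is a finite union of
shrunken copies of cells, hence closed. A point of the face spanned by `e_j, j ∈ J`, has a vertex
of weight `> c` in its cell, and that vertex lies in the same face, so by the Sperner condition its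
label is in `J`: this is the KKM covering condition. Now let `x` lie in every `C i` and in a cell
`S`. For each `i` some vertex `v` labelled `i` carries weight `≥ c > 0` at `x` in a cell `T`;
since `S ∩ T` is a common face containing `x` and barycentric coordinates in `T` are unique,
`v` is a vertex of that face, hence of `S`.
-/

open Finset

/-- `𝒮` is a simplicial subdivision of the unit simplex in `ℝ^n`: a finite collection of
`(n-1)`-simplices (each given by its `n` affinely independent vertices, lying in the unit
simplex) whose union is the unit simplex, and such that the intersection of any two of
them is empty or a common face. -/
def IsSubdivision (n : ℕ) (𝒮 : Finset (Finset (Fin n → ℝ))) : Prop :=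
  (∀ S ∈ 𝒮, S.card = n ∧ AffineIndependent ℝ ((↑) : S → (Fin n → ℝ)) ∧
    (↑S : Set (Fin n → ℝ)) ⊆ stdSimplex ℝ (Fin n)) ∧
  (⋃ S ∈ 𝒮, convexHull ℝ (↑S : Set (Fin n → ℝ))) = stdSimplex ℝ (Fin n) ∧
  (∀ S ∈ 𝒮, ∀ T ∈ 𝒮,
    convexHull ℝ (↑S : Set (Fin n → ℝ)) ∩ convexHull ℝ (↑T : Set (Fin n → ℝ)) = ∅ ∨
    ∃ F : Finset (Fin n → ℝ), F ⊆ S ∧ F ⊆ T ∧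
      convexHull ℝ (↑S : Set (Fin n → ℝ)) ∩ convexHull ℝ (↑T : Set (Fin n → ℝ)) =
        convexHull ℝ (↑F : Set (Fin n → ℝ)))

/-- `ℓ` is a Sperner labeling of the vertices of the subdivision `𝒮`: each vertex `v`
gets a label `ℓ v` with `v (ℓ v) > 0`. -/
def IsSpernerLabeling (n : ℕ) (𝒮 : Finset (Finset (Fin n → ℝ)))
    (ℓ : (Fin n → ℝ) → Fin n) : Prop :=
  ∀ S ∈ 𝒮, ∀ v ∈ S, 0 < v (ℓ v)

/-- A simplex `S` of the subdivision is completely labeled: its vertices carry all `n` labels. -/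
def IsCompletelyLabeled (n : ℕ) (S : Finset (Fin n → ℝ))
    (ℓ : (Fin n → ℝ) → Fin n) : Prop :=
  ∀ i : Fin n, ∃ v ∈ S, ℓ v = i

section Corners

variable {E : Type*} [AddCommGroup E] [Module ℝ E] {S F T : Finset E} {v x : E} {c : ℝ}

open AffineMap

lemma homothety_image_convexHull_subset (hv : v ∈ S) (hc₀ : 0 ≤ c) (hc₁ : c ≤ 1) :
    homothety v (1 - c) '' convexHull ℝ (S : Set E) ⊆ convexHull ℝ (S : Set E) := by
  rintro _ ⟨u, hu, rfl⟩
  rw [homothety_eq_lineMap]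
  exact (convex_convexHull ℝ _).lineMap_mem (subset_convexHull ℝ _ hv) hu
    ⟨by linarith, by linarith⟩

lemma exists_weights_of_mem_homothety_image_convexHull (hv : v ∈ S) (hc : c ≤ 1)
    (hx : x ∈ homothety v (1 - c) '' convexHull ℝ (S : Set E)) :
    ∃ w : E → ℝ, ∑ y ∈ S, w y = 1 ∧ c ≤ w v ∧ ∑ y ∈ S, w y • y = x := by
  classical
  obtain ⟨u, hu, rfl⟩ := hx
  obtain ⟨s, hs₀, hs₁, rfl⟩ := mem_convexHull'.1 hu
  refine ⟨fun y => (if y = v then c else 0) + (1 - c) * s y, ?_, ?_, ?_⟩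
  · rw [sum_add_distrib, ← mul_sum, hs₁, sum_ite_eq' S v, if_pos hv]
    ring
  · simpa using mul_nonneg (sub_nonneg.2 hc) (hs₀ v hv)
  · simp only [add_smul, mul_smul, ite_smul, zero_smul, sum_add_distrib, sum_ite_eq' S v,
      if_pos hv, ← smul_sum, homothety_apply, vsub_eq_sub, vadd_eq_add]
    module

lemma sum_smul_mem_homothety_image_convexHull {w : E → ℝ} (hv : v ∈ S) (hc : c < 1)
    (hw₀ : ∀ y ∈ S, 0 ≤ w y) (hw₁ : ∑ y ∈ S, w y = 1) (hwv : c ≤ w v) :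
    ∑ y ∈ S, w y • y ∈ homothety v (1 - c) '' convexHull ℝ (S : Set E) := by
  classical
  -- the preimage of the point under the homothety is the centre of mass of `w` less mass `c` at `v`
  set w' : E → ℝ := fun y => w y - if y = v then c else 0
  have hw'₁ : ∑ y ∈ S, w' y = 1 - c := by
    rw [sum_sub_distrib, hw₁, sum_ite_eq' S v, if_pos hv]
  have hw'x : ∑ y ∈ S, w' y • y = ∑ y ∈ S, w y • y - c • v := by
    simp only [w', sub_smul, ite_smul, zero_smul, sum_sub_distrib, sum_ite_eq' S v, if_pos hv]
  refine ⟨S.centerMass w' _root_.id, S.centerMass_mem_convexHull (fun y hy => ?_) (by linarith)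
    (fun y hy => hy), ?_⟩
  · by_cases hyv : y = v
    · simpa [w', hyv] using hwv
    · simpa [w', hyv] using hw₀ y hy
  · have hc' : 1 - c ≠ 0 := by linarith
    rw [centerMass, hw'₁, homothety_apply, vsub_eq_sub, vadd_eq_add]
    simp only [_root_.id, hw'x]
    rw [smul_sub (1 - c), smul_smul, mul_inv_cancel₀ hc', one_smul]
    module

lemma AffineIndependent.mem_of_homothety_image_convexHull_inter
    (hT : AffineIndependent ℝ ((↑) : T → E)) (hFT : F ⊆ T) (hv : v ∈ T) (hc₀ : 0 < c)
    (hc₁ : c ≤ 1) (hx : x ∈ homothety v (1 - c) '' convexHull ℝ (T : Set E))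
    (hxF : x ∈ convexHull ℝ (F : Set E)) : v ∈ F := by
  obtain ⟨w, hw₁, hwv, rfl⟩ := exists_weights_of_mem_homothety_image_convexHull hv hc₁ hx
  obtain ⟨t, -, ht₁, htx⟩ := mem_convexHull'.1 hxF
  by_contra hvF
  -- the weights of `x` on `T` are unique, so they coincide with those of `t` extended by zero
  have := hT.eq_of_sum_eq_sum_subtype (w₁ := w) (w₂ := (F : Set E).indicator t)
    (by rw [sum_indicator_subset _ hFT, hw₁, ht₁])
    (by
      rw [← htx, ← sum_indicator_subset _ hFT]
      exact sum_congr rfl fun y _ => Set.indicator_smul_apply_left _ t _root_.id y) v hv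
  rw [Set.indicator_of_notMem (by exact_mod_cast hvF)] at this
  linarith

end Corners

/-- The image of `conv S` under the homothety of centre `v ∈ S` and ratio `1 - c` consists of the
points of `conv S` whose barycentric weight at `v` is at least `c`. -/
def labelCorners {E ι : Type*} [AddCommGroup E] [Module ℝ E] (𝒮 : Finset (Finset E))
    (ℓ : E → ι) (c : ℝ) (i : ι) : Set E :=
  ⋃ S ∈ 𝒮, ⋃ v ∈ S, ⋃ (_ : ℓ v = i), AffineMap.homothety v (1 - c) '' convexHull ℝ (S : Set E)

lemma isClosed_labelCorners {E ι : Type*} [AddCommGroup E] [Module ℝ E] [TopologicalSpace E]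
    [IsTopologicalAddGroup E] [ContinuousSMul ℝ E] [T2Space E] (𝒮 : Finset (Finset E))
    (ℓ : E → ι) (c : ℝ) (i : ι) : IsClosed (labelCorners 𝒮 ℓ c i) :=
  isClosed_biUnion_finset fun S _ => isClosed_biUnion_finset fun v _ =>
    isClosed_iUnion_of_finite fun _ => ((S.finite_toSet.isCompact_convexHull ℝ).image
      (AffineMap.homothety_continuous v (1 - c))).isClosed

lemma apply_eq_zero_of_sum_smul_apply_eq_zero {ι : Type*} {S : Finset (ι → ℝ)} {w : (ι → ℝ) → ℝ}
    {v : ι → ℝ} {i : ι} (hS : ∀ y ∈ S, 0 ≤ y i) (hw : ∀ y ∈ S, 0 ≤ w y)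
    (hsum : (∑ y ∈ S, w y • y) i = 0) (hv : v ∈ S) (hwv : 0 < w v) : v i = 0 := by
  rw [Finset.sum_apply] at hsum
  have := (sum_eq_zero_iff_of_nonneg fun y hy => mul_nonneg (hw y hy) (hS y hy)).1 hsum v hv
  exact (mul_eq_zero.1 this).resolve_left hwv.ne'

section Subdivision

variable {n : ℕ} {𝒮 : Finset (Finset (Fin n → ℝ))} {ℓ : (Fin n → ℝ) → Fin n} {c : ℝ}

lemma IsSubdivision.convexHull_subset_stdSimplex (h𝒮 : IsSubdivision n 𝒮) {S} (hS : S ∈ 𝒮) :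
    convexHull ℝ (S : Set (Fin n → ℝ)) ⊆ stdSimplex ℝ (Fin n) :=
  convexHull_min (h𝒮.1 S hS).2.2 (convex_stdSimplex ℝ (Fin n))

lemma IsSubdivision.labelCorners_subset_stdSimplex (h𝒮 : IsSubdivision n 𝒮) (hc₀ : 0 ≤ c)
    (hc₁ : c ≤ 1) (i : Fin n) : labelCorners 𝒮 ℓ c i ⊆ stdSimplex ℝ (Fin n) := by
  simp only [labelCorners, Set.iUnion_subset_iff]
  intro S hS v hv _
  exact (homothety_image_convexHull_subset hv hc₀ hc₁).trans (h𝒮.convexHull_subset_stdSimplex hS)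

lemma IsSubdivision.convexHull_single_subset_iUnion_labelCorners (h𝒮 : IsSubdivision n 𝒮)
    (hℓ : IsSpernerLabeling n 𝒮 ℓ) (hc₀ : 0 ≤ c) (hc : n * c < 1) (J : Finset (Fin n))
    (hJ : J.Nonempty) :
    convexHull ℝ ((fun i => (Pi.single i 1 : Fin n → ℝ)) '' ↑J) ⊆ ⋃ j ∈ J, labelCorners 𝒮 ℓ c j := by
  intro x hx
  have hc₁ : c < 1 := by
    have : (1 : ℝ) ≤ n := by exact_mod_cast hJ.choose.pos
    nlinarith
  have hxΔ : x ∈ stdSimplex ℝ (Fin n) := convexHull_min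
    (by rintro _ ⟨j, -, rfl⟩; exact single_mem_stdSimplex ℝ j) (convex_stdSimplex ℝ _) hx
  have hx₀ : ∀ i ∉ J, x i = 0 := fun i hi => convexHull_min
    (by rintro _ ⟨j, hj, rfl⟩; exact Pi.single_eq_of_ne (ne_of_mem_of_not_mem hj hi).symm 1)
    (convex_hyperplane (LinearMap.proj (R := ℝ) i).isLinear 0) hx
  rw [← h𝒮.2.1] at hxΔ
  obtain ⟨S, hS, hxS⟩ := Set.mem_iUnion₂.1 hxΔ
  obtain ⟨w, hw₀, hw₁, rfl⟩ := mem_convexHull'.1 hxS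
  obtain ⟨v, hv, hcv⟩ : ∃ v ∈ S, c < w v := exists_lt_of_sum_lt <| by
    rw [sum_const, (h𝒮.1 S hS).1, nsmul_eq_mul, hw₁]
    exact hc
  have hℓv : ℓ v ∈ J := by
    by_contra hℓv
    have := apply_eq_zero_of_sum_smul_apply_eq_zero (fun y hy => ((h𝒮.1 S hS).2.2 hy).1 (ℓ v))
      hw₀ (hx₀ _ hℓv) hv (hc₀.trans_lt hcv)
    linarith [hℓ S hS v hv]
  refine Set.mem_biUnion hℓv ?_
  simp only [labelCorners, Set.mem_iUnion]
  exact ⟨S, hS, v, hv, rfl, sum_smul_mem_homothety_image_convexHull hv hc₁ hw₀ hw₁ hcv.le⟩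

lemma IsSubdivision.exists_label_of_mem_labelCorners (h𝒮 : IsSubdivision n 𝒮) (hc₀ : 0 < c)
    (hc₁ : c ≤ 1) {S} (hS : S ∈ 𝒮) {x} (hxS : x ∈ convexHull ℝ (S : Set (Fin n → ℝ))) {i}
    (hx : x ∈ labelCorners 𝒮 ℓ c i) : ∃ v ∈ S, ℓ v = i := by
  simp only [labelCorners, Set.mem_iUnion] at hx
  obtain ⟨T, hT, v, hvT, rfl, hxv⟩ := hx
  have hxT := homothety_image_convexHull_subset hvT hc₀.le hc₁ hxv
  rcases h𝒮.2.2 S hS T hT with hST | ⟨F, hFS, hFT, hST⟩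
  · exact (Set.notMem_empty x (hST ▸ ⟨hxS, hxT⟩)).elim
  · exact ⟨v, hFS ((h𝒮.1 T hT).2.1.mem_of_homothety_image_convexHull_inter hFT hvT hc₀ hc₁ hxv
      (hST ▸ ⟨hxS, hxT⟩)), rfl⟩

end Subdivision

/-- The KKM lemma implies Sperner's lemma: assuming the KKM lemma (for closed subsets of
the unit simplex in `ℝ^n`), any simplicial subdivision of the unit simplex with a Sperner
labeling contains a completely labeled simplex. -/
theorem kkm_implies_sperner (n : ℕ)
    (kkm : ∀ C : Fin n → Set (Fin n → ℝ),
      (∀ i, IsClosed (C i)) → (∀ i, C i ⊆ stdSimplex ℝ (Fin n)) →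
      (∀ J : Finset (Fin n), J.Nonempty →
        convexHull ℝ ((fun i => (Pi.single i 1 : Fin n → ℝ)) '' ↑J) ⊆ ⋃ j ∈ J, C j) →
      (⋂ i, C i).Nonempty)
    (𝒮 : Finset (Finset (Fin n → ℝ))) (h𝒮 : IsSubdivision n 𝒮)
    (ℓ : (Fin n → ℝ) → Fin n) (hℓ : IsSpernerLabeling n 𝒮 ℓ) :
    ∃ S ∈ 𝒮, IsCompletelyLabeled n S ℓ := by
  set c : ℝ := ((n : ℝ) + 1)⁻¹
  have hc₀ : 0 < c := by positivity
  have hc₁ : c ≤ 1 := inv_le_one_of_one_le₀ (by linarith [n.cast_nonneg (α := ℝ)])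
  have hnc : n * c < 1 := by
    rw [← div_eq_mul_inv, div_lt_one (by positivity)]
    linarith
  obtain ⟨x, hx⟩ := kkm (labelCorners 𝒮 ℓ c) (isClosed_labelCorners 𝒮 ℓ c)
    (h𝒮.labelCorners_subset_stdSimplex hc₀.le hc₁)
    (h𝒮.convexHull_single_subset_iUnion_labelCorners hℓ hc₀.le hnc)
  have hxC : ∀ i, x ∈ labelCorners 𝒮 ℓ c i := Set.mem_iInter.1 hx
  obtain ⟨S, hS, hxS⟩ := Set.mem_iUnion₂.1 <|
    h𝒮.2.1.symm ▸ h𝒮.labelCorners_subset_stdSimplex hc₀.le hc₁ (ℓ x) (hxC (ℓ x))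
  exact ⟨S, hS, fun i => h𝒮.exists_label_of_mem_labelCorners hc₀ hc₁ hS hxS (hxC i)⟩
end

section
/- Verification of the KKM covering condition: with $C_i$ defined as the union over simplices $S$ of the subdivision of the sets of points whose barycentric weight in $S$ on some vertex labeled $i$ is at least $1/n$, every face $\Delta_J$ of the unit simplex satisfies $\Delta_J \subseteq \bigcup_{j \in J} C_j$. -/
open Finset

/-- Verification of the KKM covering condition: with `C i` the union over simplices `S` of
the subdivision of the points whose barycentric weight in `S` on some vertex labeled `i`
is at least `1/n`, every face `Δ_J` of the unit simplex satisfies `Δ_J ⊆ ⋃ j ∈ J, C j`. -/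
theorem kkm_covering_condition (n : ℕ) (𝒮 : Finset (Finset (Fin n → ℝ)))
    (h𝒮 : IsSubdivision n 𝒮) (ℓ : (Fin n → ℝ) → Fin n)
    (hℓ : IsSpernerLabeling n 𝒮 ℓ)
    (C : Fin n → Set (Fin n → ℝ))
    (hC : ∀ i, C i = ⋃ S ∈ 𝒮, {x | ∃ w : (Fin n → ℝ) → ℝ,
      (∀ v ∈ S, 0 ≤ w v) ∧ ∑ v ∈ S, w v = 1 ∧ x = ∑ v ∈ S, w v • v ∧
      ∃ v ∈ S, ℓ v = i ∧ (1 : ℝ) / n ≤ w v})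
    (J : Finset (Fin n)) (hJ : J.Nonempty) :
    convexHull ℝ ((fun i => (Pi.single i 1 : Fin n → ℝ)) '' ↑J) ⊆ ⋃ j ∈ J, C j := by
  classical
  obtain ⟨hS, hcover, -⟩ := h𝒮
  intro x hx
  obtain ⟨j0, hj0⟩ := hJ
  have hn : 0 < n := j0.pos
  have hxstd : x ∈ stdSimplex ℝ (Fin n) := by
    refine convexHull_min ?_ (convex_stdSimplex ℝ (Fin n)) hx
    rintro _ ⟨i, -, rfl⟩
    have := ite_eq_mem_stdSimplex ℝ i
    convert this using 2 with k
    simp [Pi.single_apply, eq_comm]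
  have hxJ : ∀ k, k ∉ J → x k = 0 := by
    intro k hk
    have hsub : convexHull ℝ ((fun i => (Pi.single i 1 : Fin n → ℝ)) '' ↑J) ⊆
        {y : Fin n → ℝ | y k = 0} := by
      refine convexHull_min ?_ ?_
      · rintro _ ⟨i, hi, rfl⟩
        have : i ≠ k := fun h => hk (h ▸ hi)
        simp [Pi.single_apply, this.symm]
      · intro y hy z hz a b _ _ _
        simp only [Set.mem_setOf_eq] at hy hz ⊢
        simp [hy, hz]
    exact hsub hx
  rw [← hcover] at hxstd
  obtain ⟨S, hSmem, hxS⟩ := Set.mem_iUnion₂.mp hxstd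
  obtain ⟨hcard, -, hstd⟩ := hS S hSmem
  rw [Finset.convexHull_eq] at hxS
  obtain ⟨w, hw0, hw1, hwx⟩ := hxS
  have hx_eq : x = ∑ v ∈ S, w v • v := by
    rw [← hwx, Finset.centerMass_eq_of_sum_1 _ _ hw1]
    rfl
  have hSne : S.Nonempty := Finset.card_pos.mp (by rw [hcard]; exact hn)
  have hpig : ∃ v ∈ S, (1 : ℝ) / n ≤ w v := by
    refine Finset.exists_le_of_sum_le hSne ?_
    rw [hw1, Finset.sum_const, hcard, nsmul_eq_mul]
    rw [mul_one_div, div_self (by positivity : (n : ℝ) ≠ 0)]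
  obtain ⟨v, hvS, hvw⟩ := hpig
  have hwvpos : 0 < w v := lt_of_lt_of_le (by positivity) hvw
  have hlJ : ℓ v ∈ J := by
    by_contra hlv
    have hx0 : x (ℓ v) = 0 := hxJ _ hlv
    have hpos : 0 < x (ℓ v) := by
      rw [hx_eq]
      have : (∑ u ∈ S, w u • u) (ℓ v) = ∑ u ∈ S, w u * u (ℓ v) := by
        rw [Finset.sum_apply]; rfl
      rw [this]
      refine Finset.sum_pos' (fun u hu => ?_) ⟨v, hvS, ?_⟩
      · exact mul_nonneg (hw0 u hu) ((hstd hu).1 _)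
      · exact mul_pos hwvpos (hℓ S hSmem v hvS)
    exact absurd hx0 (ne_of_gt hpos)
  refine Set.mem_biUnion hlJ ?_
  rw [hC]
  exact Set.mem_biUnion hSmem ⟨w, hw0, hw1, hx_eq, v, hvS, rfl, hvw⟩
end

section
/- Final step of the KKM-to-Sperner argument: if a point $x^*$ lies, for every label $i \in \{1,\dots,n\}$, in some simplex $S_i$ of the subdivision with barycentric weight at least $1/n$ on a vertex $v_i$ of $S_i$ labeled $i$, then the simplex $S_1$ contains all the vertices $v_1, \dots, v_n$ among its vertices and is therefore completely labeled. -/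
open Finset

lemma key_mem_face {n : ℕ} {S F : Finset (Fin n → ℝ)}
    (hind : AffineIndependent ℝ ((↑) : S → (Fin n → ℝ))) (hFS : F ⊆ S)
    {w : (Fin n → ℝ) → ℝ} {x : Fin n → ℝ}
    (hw1 : ∑ u ∈ S, w u = 1) (hx : x = ∑ u ∈ S, w u • u)
    (hxF : x ∈ convexHull ℝ (↑F : Set (Fin n → ℝ)))
    {u₀ : Fin n → ℝ} (hu₀ : u₀ ∈ S) (hpos : 0 < w u₀) : u₀ ∈ F := by
  rw [Finset.convexHull_eq, Set.mem_setOf_eq] at hxF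
  obtain ⟨w', hw'0, hw'1, hw'x⟩ := hxF
  rw [Finset.centerMass_eq_of_sum_1 _ _ hw'1] at hw'x
  set w'' : (Fin n → ℝ) → ℝ := fun u => if u ∈ F then w' u else 0 with hw''def
  have hsum'' : ∑ u ∈ S, w'' u = 1 := by
    rw [← Finset.sum_subset hFS (fun u _ hu => if_neg hu)]
    simpa using hw'1
  have hx'' : ∑ u ∈ S, w'' u • u = x := by
    rw [← Finset.sum_subset hFS (fun u _ hu => by simp only [hw''def]; rw [if_neg hu, zero_smul])]
    rw [← hw'x]
    exact Finset.sum_congr rfl fun u hu => by rw [hw''def]; simp [if_pos hu]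
  -- now use affine independence over the subtype
  have h1 : (Finset.univ : Finset S).affineCombination ℝ ((↑) : S → (Fin n → ℝ))
      (fun u => w ↑u) = x := by
    rw [Finset.affineCombination_eq_linear_combination]
    · rw [hx, ← Finset.sum_coe_sort S (fun u => w u • u)]
    · rw [← hw1, ← Finset.sum_coe_sort S w]
  have h2 : (Finset.univ : Finset S).affineCombination ℝ ((↑) : S → (Fin n → ℝ))
      (fun u => w'' ↑u) = x := by
    rw [Finset.affineCombination_eq_linear_combination]
    · rw [← hx'', ← Finset.sum_coe_sort S (fun u => w'' u • u)]
    · rw [← hsum'', ← Finset.sum_coe_sort S w'']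
  have hkey := hind.indicator_eq_of_affineCombination_eq Finset.univ Finset.univ
    (fun u => w ↑u) (fun u => w'' ↑u)
    (by rw [← hw1, ← Finset.sum_coe_sort S w])
    (by rw [← hsum'', ← Finset.sum_coe_sort S w'']) (h1.trans h2.symm)
  have := congrFun hkey ⟨u₀, hu₀⟩
  simp only [Finset.coe_univ, Set.indicator_univ] at this
  rw [hw''def] at this
  by_contra hmem
  simp only [if_neg hmem] at this
  exact absurd this (ne_of_gt hpos)

lemma mem_hull_of_weights {n : ℕ} {S : Finset (Fin n → ℝ)} {w : (Fin n → ℝ) → ℝ}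
    {x : Fin n → ℝ} (hw0 : ∀ u ∈ S, 0 ≤ w u) (hw1 : ∑ u ∈ S, w u = 1)
    (hx : x = ∑ u ∈ S, w u • u) : x ∈ convexHull ℝ (↑S : Set (Fin n → ℝ)) := by
  rw [Finset.convexHull_eq, Set.mem_setOf_eq]
  exact ⟨w, hw0, hw1, by rw [Finset.centerMass_eq_of_sum_1 _ _ hw1, hx]; simp⟩

/-- Final step of the KKM-to-Sperner argument: if `x*` lies, for every label `i`, in a
simplex `S i` of the subdivision with barycentric weight at least `1/n` on a vertex `v i`
of `S i` labeled `i`, then the simplex `S 1` (for the first label) contains all the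
vertices `v i` among its vertices, and is therefore completely labeled. -/
theorem final_step (n : ℕ) (hn : 0 < n) (𝒮 : Finset (Finset (Fin n → ℝ)))
    (h𝒮 : IsSubdivision n 𝒮) (ℓ : (Fin n → ℝ) → Fin n)
    (hℓ : IsSpernerLabeling n 𝒮 ℓ)
    (x : Fin n → ℝ) (S : Fin n → Finset (Fin n → ℝ)) (v : Fin n → (Fin n → ℝ))
    (hS : ∀ i, S i ∈ 𝒮) (hv : ∀ i, v i ∈ S i) (hlabel : ∀ i, ℓ (v i) = i)
    (hweight : ∀ i, ∃ w : (Fin n → ℝ) → ℝ,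
      (∀ u ∈ S i, 0 ≤ w u) ∧ ∑ u ∈ S i, w u = 1 ∧ x = ∑ u ∈ S i, w u • u ∧
      (1 : ℝ) / n ≤ w (v i)) :
    (∀ i, v i ∈ S ⟨0, hn⟩) ∧ IsCompletelyLabeled n (S ⟨0, hn⟩) ℓ := by
  have hmain : ∀ i, v i ∈ S ⟨0, hn⟩ := by
    intro i
    obtain ⟨w, hw0, hw1, hx, hwv⟩ := hweight i
    obtain ⟨w0, hw00, hw01, hx0, _⟩ := hweight ⟨0, hn⟩
    have hxi : x ∈ convexHull ℝ (↑(S i) : Set (Fin n → ℝ)) :=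
      mem_hull_of_weights hw0 hw1 hx
    have hx0' : x ∈ convexHull ℝ (↑(S ⟨0, hn⟩) : Set (Fin n → ℝ)) :=
      mem_hull_of_weights hw00 hw01 hx0
    rcases h𝒮.2.2 (S i) (hS i) (S ⟨0, hn⟩) (hS ⟨0, hn⟩) with hemp | ⟨F, hFi, hF0, hFeq⟩
    · exact absurd (Set.mem_inter hxi hx0') (by rw [hemp]; exact Set.notMem_empty x)
    · have hxF : x ∈ convexHull ℝ (↑F : Set (Fin n → ℝ)) := by
        rw [← hFeq]; exact Set.mem_inter hxi hx0'
      have hpos : 0 < w (v i) := lt_of_lt_of_le (by positivity) hwv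
      exact hF0 (key_mem_face (h𝒮.1 (S i) (hS i)).2.1 hFi hw1 hx hxF (hv i) hpos)
  exact ⟨hmain, fun i => ⟨v i, hmain i, hlabel i⟩⟩
end

section
/- Counterexample construction fails for the naive approach: there exists a simplicial subdivision of the unit simplex in $\mathbb{R}^3$ with a Sperner labeling and a point $x$ such that $x$ lies in a simplex of the subdivision carrying label $i$ for every $i \in \{1,2,3\}$, yet $x$ does not lie in any completely labeled simplex of the subdivision. -/
open Finset

/-!
Cut the simplex along the median from `e₃` to `m = (e₁ + e₂)/2`, and cut both halves along
`e₁ p` and `e₂ p`, where `p` is the midpoint of that median. Label `e₁, m ↦ 0`, `e₂, p ↦ 1`,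
`e₃ ↦ 2`. The only completely labeled triangle is `e₁ p e₃`, while the midpoint `x` of the edge
`e₂ p` lies in `e₂ m p` (labels `0, 1`) and in `e₂ p e₃` (labels `1, 2`), but not in `e₁ p e₃`.

Two triangles of the subdivision meet in a common face: for each pair a linear form is `≤ d`
on one, `≥ d` on the other, and takes the value `d` only at their shared vertices.
-/

section MeetInFace

variable (𝕜 : Type*) {E : Type*} [Semiring 𝕜] [PartialOrder 𝕜] [AddCommMonoid E] [Module 𝕜 E]

def MeetInFace (S T : Finset E) : Prop :=
  ∃ F ⊆ S, F ⊆ T ∧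
    convexHull 𝕜 (S : Set E) ∩ convexHull 𝕜 (T : Set E) = convexHull 𝕜 (F : Set E)

theorem meetInFace_self (S : Finset E) : MeetInFace 𝕜 S S :=
  ⟨S, subset_rfl, subset_rfl, Set.inter_self _⟩

variable {𝕜}

theorem MeetInFace.symm {S T : Finset E} (h : MeetInFace 𝕜 S T) : MeetInFace 𝕜 T S := by
  obtain ⟨F, hFS, hFT, h⟩ := h
  exact ⟨F, hFT, hFS, by rw [Set.inter_comm, h]⟩

end MeetInFace

theorem card_eq_three_and_affineIndependent {𝕜 E : Type*} [Field 𝕜] [AddCommGroup E]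
    [Module 𝕜 E] [DecidableEq E] {P Q R : E}
    (h : LinearIndependent 𝕜 ![P, Q, R]) :
    ({P, Q, R} : Finset E).card = 3 ∧
      AffineIndependent 𝕜 ((↑) : ({P, Q, R} : Finset E) → E) := by
  refine ⟨Finset.card_eq_three.2 ⟨P, Q, R, h.injective.ne (by decide : (0 : Fin 3) ≠ 1),
    h.injective.ne (by decide : (0 : Fin 3) ≠ 2), h.injective.ne (by decide : (1 : Fin 3) ≠ 2),
    rfl⟩, ?_⟩
  have hrange : Set.range ![P, Q, R] = (({P, Q, R} : Finset E) : Set E) := by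
    ext; simp [or_comm, or_left_comm]
  have := h.affineIndependent.range
  rw [hrange] at this
  exact this

section Convex

variable {𝕜 E : Type*} [Field 𝕜] [LinearOrder 𝕜] [IsStrictOrderedRing 𝕜]
  [AddCommGroup E] [Module 𝕜 E]

theorem segment_eq_union_lineMap {Q R : E} {t : 𝕜} (ht : t ∈ Set.Icc 0 1) :
    segment 𝕜 Q R =
      segment 𝕜 Q (AffineMap.lineMap Q R t) ∪ segment 𝕜 (AffineMap.lineMap Q R t) R := by
  have split : segment 𝕜 (0 : 𝕜) 1 = segment 𝕜 0 t ∪ segment 𝕜 t 1 := by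
    rw [segment_eq_Icc zero_le_one, segment_eq_Icc ht.1, segment_eq_Icc ht.2,
      Set.Icc_union_Icc_eq_Icc ht.1 ht.2]
  have h := congrArg (AffineMap.lineMap (k := 𝕜) Q R '' ·) split
  simpa only [Set.image_union, image_segment, AffineMap.lineMap_apply_zero,
    AffineMap.lineMap_apply_one] using h

theorem convexHull_triple_eq_union_lineMap (X Q R : E) {t : 𝕜} (ht : t ∈ Set.Icc 0 1) :
    convexHull 𝕜 {X, Q, R} =
      convexHull 𝕜 {X, Q, AffineMap.lineMap Q R t} ∪
        convexHull 𝕜 {X, AffineMap.lineMap Q R t, R} := by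
  rw [convexHull_insert (Set.insert_nonempty _ _), convexHull_insert (Set.insert_nonempty _ _),
    convexHull_insert (Set.insert_nonempty _ _), convexHull_pair, convexHull_pair,
    convexHull_pair, segment_eq_union_lineMap ht, convexJoin_union_right]

theorem LinearMap.map_le_of_mem_convexHull (f : E →ₗ[𝕜] 𝕜) {s : Set E} {d : 𝕜}
    (hs : ∀ v ∈ s, f v ≤ d) {y : E} (hy : y ∈ convexHull 𝕜 s) : f y ≤ d :=
  convexHull_min hs (convex_halfSpace_le f.isLinear d) hy

theorem LinearMap.mem_convexHull_filter_of_map_eq (f : E →ₗ[𝕜] 𝕜) {s : Finset E} {d : 𝕜}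
    (hs : ∀ v ∈ s, f v ≤ d) {y : E} (hy : y ∈ convexHull 𝕜 (s : Set E)) (hfy : f y = d) :
    y ∈ convexHull 𝕜 (s.filter (f · = d) : Set E) := by
  obtain ⟨w, hw₀, hw₁, rfl⟩ := Finset.mem_convexHull'.1 hy
  have slack : ∑ v ∈ s, w v * (d - f v) = 0 := by
    simp only [mul_sub, Finset.sum_sub_distrib, ← Finset.sum_mul, hw₁, one_mul, ← hfy,
      map_sum, map_smul, smul_eq_mul, sub_self]
  have hw : ∀ v ∈ s, w v ≠ 0 → f v = d := fun v hv hwv => by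
    have := (Finset.sum_eq_zero_iff_of_nonneg fun u hu =>
      mul_nonneg (hw₀ u hu) (sub_nonneg.2 (hs u hu))).1 slack v hv
    linarith [(mul_eq_zero.1 this).resolve_left hwv]
  refine Finset.mem_convexHull'.2 ⟨w, fun v hv => hw₀ v (Finset.mem_filter.1 hv).1, ?_, ?_⟩
  · rwa [Finset.sum_filter_of_ne hw]
  · exact Finset.sum_filter_of_ne fun v hv hwv => hw v hv fun h => hwv (by rw [h, zero_smul])

theorem meetInFace_of_separated (f : E →ₗ[𝕜] 𝕜) (d : 𝕜) {S T : Finset E}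
    (hS : ∀ v ∈ S, f v ≤ d) (hT : ∀ v ∈ T, d ≤ f v) (hST : ∀ v ∈ S, f v = d → v ∈ T) :
    MeetInFace 𝕜 S T := by
  have hFT : S.filter (f · = d) ⊆ T := fun v hv => hST v (mem_filter.1 hv).1 (mem_filter.1 hv).2
  refine ⟨S.filter (f · = d), filter_subset _ _, hFT, Set.Subset.antisymm ?_ ?_⟩
  · rintro y ⟨hyS, hyT⟩
    have hge : d ≤ f y := by
      simpa using (-f).map_le_of_mem_convexHull (d := -d) (fun v hv => by simpa using hT v hv) hyT
    exact f.mem_convexHull_filter_of_map_eq hS hyS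
      (le_antisymm (f.map_le_of_mem_convexHull hS hyS) hge)
  · exact Set.subset_inter (convexHull_mono (coe_subset.2 (filter_subset _ _)))
      (convexHull_mono (coe_subset.2 hFT))

end Convex

namespace NaiveSperner

open AffineMap

noncomputable section

def e₁ : Fin 3 → ℝ := ![1, 0, 0]
def e₂ : Fin 3 → ℝ := ![0, 1, 0]
def e₃ : Fin 3 → ℝ := ![0, 0, 1]
def m : Fin 3 → ℝ := ![1/2, 1/2, 0]
def p : Fin 3 → ℝ := ![1/4, 1/4, 1/2]
def x : Fin 3 → ℝ := ![1/8, 5/8, 1/4]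

theorem lineMap_e₁_e₂ : lineMap e₁ e₂ (1/2 : ℝ) = m := by
  ext i; fin_cases i <;> norm_num [lineMap_apply_module, e₁, e₂, m]

theorem lineMap_m_e₃ : lineMap m e₃ (1/2 : ℝ) = p := by
  ext i; fin_cases i <;> norm_num [lineMap_apply_module, m, e₃, p]

theorem lineMap_e₂_p : lineMap e₂ p (1/2 : ℝ) = x := by
  ext i; fin_cases i <;> norm_num [lineMap_apply_module, e₂, p, x]

theorem half_mem_Icc : (1/2 : ℝ) ∈ Set.Icc 0 1 := ⟨by norm_num, by norm_num⟩

def A : Finset (Fin 3 → ℝ) := {e₁, m, p}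
def B : Finset (Fin 3 → ℝ) := {e₂, m, p}
def C : Finset (Fin 3 → ℝ) := {e₁, p, e₃}
def D : Finset (Fin 3 → ℝ) := {e₂, p, e₃}

def subdivision : Finset (Finset (Fin 3 → ℝ)) := {A, B, C, D}

def label (v : Fin 3 → ℝ) : Fin 3 := if v = e₂ ∨ v = p then 1 else if v = e₃ then 2 else 0

theorem label_e₁ : label e₁ = 0 := by simp [label, e₁, e₂, e₃, p, funext_iff, Fin.forall_fin_succ]
theorem label_e₂ : label e₂ = 1 := by simp [label]
theorem label_e₃ : label e₃ = 2 := by simp [label, e₂, e₃, p, funext_iff, Fin.forall_fin_succ]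
theorem label_m : label m = 0 := by simp [label, m, e₂, e₃, p, funext_iff, Fin.forall_fin_succ]
theorem label_p : label p = 1 := by simp [label]

theorem mem_subdivision {S : Finset (Fin 3 → ℝ)} :
    S ∈ subdivision ↔ S = A ∨ S = B ∨ S = C ∨ S = D := by
  simp [subdivision]

theorem convexHull_eq_stdSimplex : convexHull ℝ {e₁, e₂, e₃} = stdSimplex ℝ (Fin 3) := by
  rw [← convexHull_basis_eq_stdSimplex]
  congr 1
  ext v
  simp [e₁, e₂, e₃, Fin.exists_fin_succ, funext_iff, Fin.forall_fin_succ, eq_comm]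
  tauto

theorem iUnion_convexHull_eq_stdSimplex :
    ⋃ S ∈ subdivision, convexHull ℝ (S : Set (Fin 3 → ℝ)) = stdSimplex ℝ (Fin 3) := by
  have hAC := convexHull_triple_eq_union_lineMap e₁ m e₃ half_mem_Icc
  have hBD := convexHull_triple_eq_union_lineMap e₂ m e₃ half_mem_Icc
  have hΔ := convexHull_triple_eq_union_lineMap e₃ e₁ e₂ half_mem_Icc
  rw [lineMap_m_e₃] at hAC hBD
  rw [lineMap_e₁_e₂] at hΔ
  calc ⋃ S ∈ subdivision, convexHull ℝ (S : Set (Fin 3 → ℝ))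
      = (convexHull ℝ {e₁, m, p} ∪ convexHull ℝ {e₁, p, e₃}) ∪
          (convexHull ℝ {e₂, m, p} ∪ convexHull ℝ {e₂, p, e₃}) := by
        simp only [subdivision, Finset.set_biUnion_insert, Finset.set_biUnion_singleton, A, B, C,
          D, Finset.coe_insert, Finset.coe_singleton]
        ac_rfl
    _ = convexHull ℝ {e₃, e₁, m} ∪ convexHull ℝ {e₃, m, e₂} := by
        rw [← hAC, ← hBD, Set.pair_comm m e₃, Set.insert_comm e₁ e₃, Set.insert_comm e₂ e₃,
          Set.pair_comm e₂ m]
    _ = stdSimplex ℝ (Fin 3) := by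
        rw [← hΔ, Set.insert_comm e₃ e₁, Set.pair_comm e₃ e₂, convexHull_eq_stdSimplex]

theorem card_eq_three_and_affineIndependent_of_mem {S : Finset (Fin 3 → ℝ)}
    (hS : S ∈ subdivision) :
    S.card = 3 ∧ AffineIndependent ℝ ((↑) : S → (Fin 3 → ℝ)) := by
  rcases mem_subdivision.1 hS with rfl | rfl | rfl | rfl <;>
  exact card_eq_three_and_affineIndependent (Matrix.linearIndependent_rows_of_det_ne_zero
    (A := Matrix.of ![_, _, _]) (by simp [Matrix.det_fin_three, e₁, e₂, e₃, m, p]))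

def form (a b c : ℝ) : (Fin 3 → ℝ) →ₗ[ℝ] ℝ := dotProductEquiv ℝ (Fin 3) ![a, b, c]

theorem form_apply (a b c : ℝ) (y : Fin 3 → ℝ) : form a b c y = a * y 0 + b * y 1 + c * y 2 := by
  simp [form, dotProduct, Fin.sum_univ_three]

theorem meetInFace_of_mem {S T : Finset (Fin 3 → ℝ)} (hS : S ∈ subdivision)
    (hT : T ∈ subdivision) : MeetInFace ℝ S T := by
  have AB : MeetInFace ℝ A B := meetInFace_of_separated (form 0 2 1) 1 ?_ ?_ ?_
  have AC : MeetInFace ℝ A C := meetInFace_of_separated (form 0 (-2) 1) 0 ?_ ?_ ?_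
  have AD : MeetInFace ℝ A D := meetInFace_of_separated (form 0 1 1) (3/4) ?_ ?_ ?_
  have BC : MeetInFace ℝ B C := meetInFace_of_separated (form 1 (-3) 1) 0 ?_ ?_ ?_
  have BD : MeetInFace ℝ B D := meetInFace_of_separated (form 0 2 3) 2 ?_ ?_ ?_
  have CD : MeetInFace ℝ C D := meetInFace_of_separated (form 0 2 1) 1 ?_ ?_ ?_
  rcases mem_subdivision.1 hS with rfl | rfl | rfl | rfl <;>
  rcases mem_subdivision.1 hT with rfl | rfl | rfl | rfl <;>
  first
  | exact meetInFace_self ℝ _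
  | assumption
  | exact MeetInFace.symm ‹_›
  -- the side conditions of the six separations: evaluating each form at the vertices
  all_goals simp [A, B, C, D, form_apply, e₁, e₂, e₃, m, p] <;> norm_num

theorem isSubdivision : IsSubdivision 3 subdivision := by
  refine ⟨fun S hS => ⟨(card_eq_three_and_affineIndependent_of_mem hS).1,
    (card_eq_three_and_affineIndependent_of_mem hS).2, ?_⟩, iUnion_convexHull_eq_stdSimplex,
    fun S hS T hT => Or.inr (meetInFace_of_mem hS hT)⟩
  rw [← iUnion_convexHull_eq_stdSimplex]
  exact Set.subset_iUnion₂_of_subset S hS (subset_convexHull ℝ _)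

theorem isSpernerLabeling : IsSpernerLabeling 3 subdivision label := by
  intro S hS
  rcases mem_subdivision.1 hS with rfl | rfl | rfl | rfl <;>
  simp only [A, B, C, D, Finset.forall_mem_insert, Finset.mem_singleton, forall_eq, label_e₁,
    label_e₂, label_e₃, label_m, label_p] <;>
  simp [e₁, e₂, e₃, m, p]

theorem eq_C_of_isCompletelyLabeled {S : Finset (Fin 3 → ℝ)} (hS : S ∈ subdivision)
    (h : IsCompletelyLabeled 3 S label) : S = C := by
  rcases mem_subdivision.1 hS with rfl | rfl | rfl | rfl
  · simpa [A, label_e₁, label_m, label_p] using h 2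
  · simpa [B, label_e₂, label_m, label_p] using h 2
  · rfl
  · simpa [D, label_e₂, label_e₃, label_p] using h 0

theorem x_mem_convexHull {S : Finset (Fin 3 → ℝ)} (h₂ : e₂ ∈ S) (hp : p ∈ S) :
    x ∈ convexHull ℝ (S : Set (Fin 3 → ℝ)) := by
  rw [← lineMap_e₂_p]
  refine convexHull_mono (s := {e₂, p}) (by simp [Set.insert_subset_iff, h₂, hp]) ?_
  rw [convexHull_pair]
  exact lineMap_mem_segment ℝ _ _ half_mem_Icc

theorem x_notMem_convexHull_C : x ∉ convexHull ℝ (C : Set (Fin 3 → ℝ)) := fun hx => by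
  have := (form 0 2 (-1)).map_le_of_mem_convexHull (d := 0)
    (by simp [C, form_apply, e₁, e₃, p]; norm_num) hx
  simp [form_apply, x] at this
  norm_num at this

theorem exists_mem_convexHull_x_label_eq (i : Fin 3) :
    ∃ S ∈ subdivision, x ∈ convexHull ℝ (S : Set (Fin 3 → ℝ)) ∧ ∃ v ∈ S, label v = i := by
  have hB : B ∈ subdivision := by simp [subdivision]
  have hD : D ∈ subdivision := by simp [subdivision]
  have hxB : x ∈ convexHull ℝ (B : Set (Fin 3 → ℝ)) := x_mem_convexHull (by simp [B]) (by simp [B])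
  have hxD : x ∈ convexHull ℝ (D : Set (Fin 3 → ℝ)) := x_mem_convexHull (by simp [D]) (by simp [D])
  fin_cases i
  · exact ⟨B, hB, hxB, m, by simp [B], label_m⟩
  · exact ⟨B, hB, hxB, e₂, by simp [B], label_e₂⟩
  · exact ⟨D, hD, hxD, e₃, by simp [D], label_e₃⟩

end

end NaiveSperner

/-- The naive approach fails: there is a simplicial subdivision of the unit simplex in
`ℝ³` with a Sperner labeling and a point `x` such that for every label `i`, `x` lies in
some simplex of the subdivision carrying label `i`, yet `x` lies in no completely labeled
simplex of the subdivision. -/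
theorem naive_approach_counterexample :
    ∃ (𝒮 : Finset (Finset (Fin 3 → ℝ))) (ℓ : (Fin 3 → ℝ) → Fin 3) (x : Fin 3 → ℝ),
      IsSubdivision 3 𝒮 ∧ IsSpernerLabeling 3 𝒮 ℓ ∧
      (∀ i : Fin 3, ∃ S ∈ 𝒮, x ∈ convexHull ℝ (↑S : Set (Fin 3 → ℝ)) ∧
        ∃ v ∈ S, ℓ v = i) ∧
      (∀ S ∈ 𝒮, IsCompletelyLabeled 3 S ℓ →
        x ∉ convexHull ℝ (↑S : Set (Fin 3 → ℝ))) := by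
  open NaiveSperner in
  exact ⟨subdivision, label, x, isSubdivision, isSpernerLabeling,
    exists_mem_convexHull_x_label_eq,
    fun S hS hS' => eq_C_of_isCompletelyLabeled hS hS' ▸ x_notMem_convexHull_C⟩
end
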